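/- The function y(x) = cot(π/x) is strictly concave on the interval (2, ∞); equivalently, its second derivative is negative for all x > 2. -/

import Mathlib

open Real

/-! For x > 2 put t = π / x ∈ (0, π / 2). The derivative of cot (π / x) is π / (x sin t)², and
differentiating once more gives -2π (sin t - t cos t) / (x sin t)³, which is negative because
t cos t < sin t is the inequality t < tan t. -/

theorem Real.hasDerivAt_cot {t : ℝ} (ht : sin t ≠ 0) : HasDerivAt cot (-1 / sin t ^ 2) t := by
  rw [show cot = fun t => cos t / sin t from funext cot_eq_cos_div_sin]
  refine ((hasDerivAt_cos t).fun_div (hasDerivAt_sin t) ht).congr_deriv ?_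
  rw [← sin_sq_add_cos_sq t]
  ring

theorem hasDerivAt_const_div {𝕜 : Type*} [NontriviallyNormedField 𝕜] (c : 𝕜) {x : 𝕜}
    (hx : x ≠ 0) : HasDerivAt (fun y => c / y) (-(c / x ^ 2)) x := by
  simpa [div_eq_mul_inv] using (hasDerivAt_inv hx).const_mul c

theorem hasDerivAt_cot_const_div (c : ℝ) {x : ℝ} (hx : x ≠ 0) (hs : sin (c / x) ≠ 0) :
    HasDerivAt (fun y => cot (c / y)) (c / (x * sin (c / x)) ^ 2) x := by
  refine ((Real.hasDerivAt_cot hs).comp x (hasDerivAt_const_div c hx)).congr_deriv ?_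
  field_simp

theorem hasDerivAt_mul_sin_const_div (c : ℝ) {x : ℝ} (hx : x ≠ 0) :
    HasDerivAt (fun y => y * sin (c / y)) (sin (c / x) - c / x * cos (c / x)) x := by
  refine ((hasDerivAt_id' x).mul (hasDerivAt_const_div c hx).sin).congr_deriv ?_
  field_simp
  ring

theorem HasDerivAt.const_div_sq {𝕜 : Type*} [NontriviallyNormedField 𝕜] {f : 𝕜 → 𝕜} {f' x : 𝕜}
    (c : 𝕜) (hf : HasDerivAt f f' x) (hx : f x ≠ 0) : HasDerivAt (fun y => c / f y ^ 2) (-(2 * c * f') / f x ^ 3) x := by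
  refine ((hasDerivAt_const x c).fun_div (hf.fun_pow 2) (pow_ne_zero 2 hx)).congr_deriv ?_
  field_simp
  ring

theorem Real.mul_cos_lt_sin {t : ℝ} (h0 : 0 < t) (h1 : t < π / 2) : t * cos t < sin t := by
  have hc : 0 < cos t := cos_pos_of_mem_Ioo ⟨by linarith, h1⟩
  simpa [tan_eq_sin_div_cos, lt_div_iff₀ hc] using lt_tan h0 h1

theorem pi_div_mem_Ioo {x : ℝ} (hx : 2 < x) : π / x ∈ Set.Ioo 0 (π / 2) :=
  ⟨by positivity, div_lt_div_of_pos_left pi_pos two_pos hx⟩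

theorem sin_pi_div_pos {x : ℝ} (hx : 2 < x) : 0 < sin (π / x) :=
  sin_pos_of_pos_of_lt_pi (pi_div_mem_Ioo hx).1 (by linarith [(pi_div_mem_Ioo hx).2, pi_pos])

theorem iteratedDeriv_two_cot_pi_div_neg {x : ℝ} (hx : 2 < x) :
    iteratedDeriv 2 (fun x : ℝ => cot (π / x)) x < 0 := by
  have hderiv : deriv (fun x : ℝ => cot (π / x)) =ᶠ[nhds x]
      fun y => π / (y * sin (π / y)) ^ 2 :=
    Filter.eventuallyEq_of_mem (isOpen_Ioi.mem_nhds hx) fun y hy =>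
      (hasDerivAt_cot_const_div π (by linarith [hy.out] : (0 : ℝ) < y).ne'
        (sin_pi_div_pos hy).ne').deriv
  have hx0 : 0 < x := by linarith
  have hpos : 0 < x * sin (π / x) := mul_pos hx0 (sin_pi_div_pos hx)
  have hdenom := (hasDerivAt_mul_sin_const_div π hx0.ne').const_div_sq π hpos.ne'
  have hsin_sub : 0 < sin (π / x) - π / x * cos (π / x) :=
    sub_pos.2 (mul_cos_lt_sin (pi_div_mem_Ioo hx).1 (pi_div_mem_Ioo hx).2)
  rw [iteratedDeriv_succ, iteratedDeriv_one, hderiv.deriv_eq, hdenom.deriv]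
  exact div_neg_of_neg_of_pos (neg_neg_of_pos (by positivity)) (by positivity)

theorem cot_strictConcaveOn :
    StrictConcaveOn ℝ (Set.Ioi (2 : ℝ)) (fun x : ℝ => Real.cot (π / x)) ∧
    ∀ x : ℝ, 2 < x → iteratedDeriv 2 (fun x : ℝ => Real.cot (π / x)) x < 0 := by
  refine ⟨strictConcaveOn_of_deriv2_neg' (convex_Ioi 2) ?_ fun x hx => ?_,
    fun x hx => iteratedDeriv_two_cot_pi_div_neg hx⟩
  · intro x hx
    exact (hasDerivAt_cot_const_div π (by linarith [hx.out] : (0 : ℝ) < x).ne'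
      (sin_pi_div_pos hx).ne').continuousAt.continuousWithinAt
  · rw [← iteratedDeriv_eq_iterate]
    exact iteratedDeriv_two_cot_pi_div_neg hx
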